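/- arXiv:1405.3365 — 3 statements merged into one kernel-verified Lean document; each statement's English description precedes it below -/
import Mathlib

section
/- Let KB = (L, Π) be an FOL-program and I ⊆ Lit_Π. The union of all unfounded sets of KB relative to I is itself an unfounded set of KB relative to I; consequently the greatest unfounded set of KB relative to I exists and equals the union of all unfounded sets of KB relative to I. -/
/-!
Formalization of FOL-programs (combined knowledge bases `KB = (L, Π)` of a
first-order theory and a ground rule base) and their well-founded semantics.

* The Herbrand base `HB_Π` is modelled as a type `Atom`; each atom `a` has an
  associated first-order sentence `toSent a`, and `inOmega a` says whether the
  predicate symbol of `a` is in the shared set `Ω` (atoms with `¬ inOmega a`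
  are the *ordinary* atoms).
* The field `atomic` expresses that atoms are genuinely atomic ground
  sentences: every consistent set of literals is a satisfiable theory.
* Literals `Lit Atom = Atom ⊕ Atom`: `Sum.inl a` is the atom `a`,
  `Sum.inr a` is the negated atom `¬ a`.
-/

open FirstOrder

namespace FOLProg

variable {L : FirstOrder.Language} {Atom : Type*}

/-- Literals over the Herbrand base: `Sum.inl a` is `a`, `Sum.inr a` is `¬ a`. -/
abbrev Lit (Atom : Type*) := Atom ⊕ Atom

/-- A body element of a rule: an atom of the Herbrand base, or an FOL sentence. -/
inductive BElem (L : FirstOrder.Language) (Atom : Type*) where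
  | atom : Atom → BElem L Atom
  | fol : L.Sentence → BElem L Atom

/-- A ground rule `head ← pos, not neg`. -/
structure Rule (L : FirstOrder.Language) (Atom : Type*) where
  head : Atom
  pos : Set (BElem L Atom)
  neg : Set (BElem L Atom)

/-- `S⁺`. -/
def litPos (S : Set (Lit Atom)) : Set Atom := {a | Sum.inl a ∈ S}

/-- `S⁻`. -/
def litNeg (S : Set (Lit Atom)) : Set Atom := {a | Sum.inr a ∈ S}

/-- A set of literals is consistent: `S⁺ ∩ S⁻ = ∅`. -/
def LitConsistent (S : Set (Lit Atom)) : Prop := litPos S ∩ litNeg S = ∅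

/-- The theory of *all* literals of `S` (positive atoms as their sentences,
negative ones negated). -/
def litTheory (toSent : Atom → L.Sentence) (S : Set (Lit Atom)) : L.Theory :=
  toSent '' litPos S ∪ (fun a => (toSent a).not) '' litNeg S

/-- An FOL-program `KB = (L, Π)` over the Herbrand base `Atom`. -/
structure KB (L : FirstOrder.Language) (Atom : Type*) where
  /-- the first-order theory `L` -/
  theory : L.Theory
  /-- the first-order sentence of each ground atom of the Herbrand base -/
  toSent : Atom → L.Sentence
  /-- whether the predicate symbol of an atom belongs to `Ω` -/
  inOmega : Atom → Prop
  /-- the rule base `Π` -/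
  rules : Set (Rule L Atom)
  /-- atoms are atomic: any consistent set of ground literals is satisfiable -/
  atomic : ∀ S : Set (Lit Atom), LitConsistent S → (litTheory toSent S).IsSatisfiable

namespace KB

variable (kb : KB L Atom)

/-- `S|_Ω`, as a first-order theory. -/
def restrict (S : Set (Lit Atom)) : L.Theory :=
  kb.toSent '' {a | Sum.inl a ∈ S ∧ kb.inOmega a} ∪
    (fun a => (kb.toSent a).not) '' {a | Sum.inr a ∈ S ∧ kb.inOmega a}

/-- The theory `L ∪ S|_Ω`. -/
def extTheory (S : Set (Lit Atom)) : L.Theory := kb.theory ∪ kb.restrict S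

/-- `S` is consistent with `L` (equivalently, `S ∪ L` is consistent):
`S` is a consistent set of literals and `L ∪ S|_Ω` is satisfiable. -/
def ConsistentWith (S : Set (Lit Atom)) : Prop :=
  LitConsistent S ∧ (kb.extTheory S).IsSatisfiable

/-- The FOL-formulas among a set of body elements, as sentences: the explicit
FOL-formulas together with the (sentences of the) non-ordinary atoms. -/
def folOf (s : Set (BElem L Atom)) : Set L.Sentence :=
  {φ | BElem.fol φ ∈ s} ∪ kb.toSent '' {a | BElem.atom a ∈ s ∧ kb.inOmega a}

/-- Conditions (a) and (b) of the definition of an unfounded set `U` of `KB`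
relative to a set of literals `I` (the case where `I ∪ L` is consistent). -/
def UnfoundedCond (I : Set (Lit Atom)) (U : Set Atom) : Prop :=
  ∀ H ∈ U,
    (∀ r ∈ kb.rules, r.head = H →
      -- (i) `¬A ∈ I ∪ ¬.U` for some ordinary atom `A ∈ pos(r)`
      (∃ a, BElem.atom a ∈ r.pos ∧ ¬ kb.inOmega a ∧ (Sum.inr a ∈ I ∨ a ∈ U)) ∨
      -- (ii) `B ∈ I` for some ordinary atom `B ∈ neg(r)`
      (∃ b, BElem.atom b ∈ r.neg ∧ ¬ kb.inOmega b ∧ Sum.inl b ∈ I) ∨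
      -- (iii) some FOL-formula `A ∈ pos(r)` is not entailed under any
      -- consistent extension of `I ∪ ¬.U`
      (∃ φ ∈ kb.folOf r.pos, ∀ S : Set (Lit Atom), LitConsistent S →
        I ∪ Sum.inr '' U ⊆ S → ¬ kb.extTheory S ⊨ᵇ φ) ∨
      -- (iv) some FOL-formula `A ∈ neg(r)` with `L ∪ I|_Ω ⊨ A`
      (∃ φ ∈ kb.folOf r.neg, kb.extTheory I ⊨ᵇ φ)) ∧
    -- (b) `L ∪ S|_Ω ⊭ H` for all consistent `S ⊇ I ∪ ¬.U`
    (∀ S : Set (Lit Atom), LitConsistent S → I ∪ Sum.inr '' U ⊆ S →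
      ¬ kb.extTheory S ⊨ᵇ kb.toSent H)

/-- `U` is an unfounded set of `KB` relative to `I`.  If `I ∪ L` is
inconsistent, the unfounded set is (by definition) the whole Herbrand base. -/
def IsUnfounded (I : Set (Lit Atom)) (U : Set Atom) : Prop :=
  (kb.ConsistentWith I ∧ kb.UnfoundedCond I U) ∨
    (¬ kb.ConsistentWith I ∧ U = Set.univ)

/-- The consequence operator `T_KB`. -/
def TOp (I : Set (Lit Atom)) : Set Atom :=
  {H | ¬ kb.ConsistentWith I ∨
    -- (a) some rule `r` with `head(r) = H` whose body holds
    (∃ r ∈ kb.rules, r.head = H ∧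
      (∀ a, BElem.atom a ∈ r.pos → ¬ kb.inOmega a → Sum.inl a ∈ I) ∧
      (∀ a, BElem.atom a ∈ r.neg → ¬ kb.inOmega a → Sum.inr a ∈ I) ∧
      (∀ φ ∈ kb.folOf r.pos, kb.extTheory I ⊨ᵇ φ) ∧
      (∀ φ ∈ kb.folOf r.neg, ∀ S : Set (Lit Atom), LitConsistent S → I ⊆ S →
        ¬ kb.extTheory S ⊨ᵇ φ)) ∨
    -- (b) `L ∪ I|_Ω ⊨ H`
    kb.extTheory I ⊨ᵇ kb.toSent H}

/-- `U_KB(I)`: the greatest unfounded set of `KB` relative to `I`, i.e. the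
union of all unfounded sets of `KB` relative to `I`. -/
def UOp (I : Set (Lit Atom)) : Set Atom := ⋃₀ {U | kb.IsUnfounded I U}

/-- `Z_KB(I) = {A ∈ HB_Π | L ∪ I|_Ω ⊨ ¬A}`: direct negative consequences. -/
def ZOp (I : Set (Lit Atom)) : Set Atom :=
  {a | kb.extTheory I ⊨ᵇ (kb.toSent a).not}

/-- `W_KB(I) = T_KB(I) ∪ ¬.U_KB(I) ∪ ¬.Z_KB(I)`. -/
def WOp (I : Set (Lit Atom)) : Set (Lit Atom) :=
  Sum.inl '' kb.TOp I ∪ Sum.inr '' kb.UOp I ∪ Sum.inr '' kb.ZOp I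

/-- The well-founded semantics of `KB`: the least fixpoint of `W_KB`
(by Knaster–Tarski, the intersection of all prefixed points). -/
def wfs : Set (Lit Atom) := sInf {I | kb.WOp I ⊆ I}

/-! ### Standard notions for normal logic programs -/

/-- `KB = (∅, Π)` is a normal logic program: the first-order theory is empty
and every rule has only ordinary atoms in its head and body (hence `Ω = ∅`). -/
def IsNormal : Prop :=
  kb.theory = ∅ ∧ (∀ a : Atom, ¬ kb.inOmega a) ∧
    ∀ r ∈ kb.rules, ∀ e ∈ r.pos ∪ r.neg, ∃ a, e = BElem.atom a

/-- The standard immediate-consequence operator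
`T_Π(S) = {head(r) | r ∈ Π, pos(r) ∪ ¬.neg(r) ⊆ S}` of a normal program. -/
def StdT (S : Set (Lit Atom)) : Set Atom :=
  {H | ∃ r ∈ kb.rules, r.head = H ∧
    (∀ a, BElem.atom a ∈ r.pos → Sum.inl a ∈ S) ∧
    (∀ a, BElem.atom a ∈ r.neg → Sum.inr a ∈ S)}

/-- `U` is an unfounded set of the normal program `Π` w.r.t. `S` in the
standard sense. -/
def StdUnfounded (S : Set (Lit Atom)) (U : Set Atom) : Prop :=
  ∀ a ∈ U, ∀ r ∈ kb.rules, r.head = a →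
    (∃ b, BElem.atom b ∈ r.pos ∧ (Sum.inr b ∈ S ∨ b ∈ U)) ∨
    (∃ b, BElem.atom b ∈ r.neg ∧ Sum.inl b ∈ S)

/-- `U_Π(S)`: the greatest standard unfounded set of `Π` w.r.t. `S`. -/
def StdU (S : Set (Lit Atom)) : Set Atom := ⋃₀ {U | kb.StdUnfounded S U}

/-- `W_Π(S) = T_Π(S) ∪ ¬.U_Π(S)`. -/
def StdW (S : Set (Lit Atom)) : Set (Lit Atom) :=
  Sum.inl '' kb.StdT S ∪ Sum.inr '' kb.StdU S

/-- The standard well-founded semantics `lfp(W_Π)` of the normal program `Π`. -/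
def stdWfs : Set (Lit Atom) := sInf {S | kb.StdW S ⊆ S}

/-! ### Two-valued satisfaction and well-supported answer sets -/

/-- The theory `L ∪ I|_Ω ∪ ¬.Ī|_Ω` of a total interpretation `I ⊆ HB_Π`. -/
def totTheory (I : Set Atom) : L.Theory :=
  kb.theory ∪ kb.toSent '' {a | a ∈ I ∧ kb.inOmega a} ∪
    (fun a => (kb.toSent a).not) '' {a | a ∉ I ∧ kb.inOmega a}

/-- `I ⊨_L e` for a total interpretation `I` and a body element `e`:
membership for ordinary atoms, entailment from `L ∪ I|_Ω ∪ ¬.Ī|_Ω` for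
FOL-formulas (including non-ordinary atoms). -/
def sat2 (I : Set Atom) : BElem L Atom → Prop
  | .atom a => (¬ kb.inOmega a ∧ a ∈ I) ∨
      (kb.inOmega a ∧ kb.totTheory I ⊨ᵇ kb.toSent a)
  | .fol φ => kb.totTheory I ⊨ᵇ φ

/-- `I ⊨_L body(r)`. -/
def satBody (I : Set Atom) (r : Rule L Atom) : Prop :=
  (∀ e ∈ r.pos, kb.sat2 I e) ∧ (∀ e ∈ r.neg, ¬ kb.sat2 I e)

/-- `I` is a model of `KB`: `I` is consistent with `L` and satisfies all
rules of `Π`. -/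
def IsModel (I : Set Atom) : Prop :=
  (kb.totTheory I).IsSatisfiable ∧
    ∀ r ∈ kb.rules, kb.satBody I r → kb.sat2 I (BElem.atom r.head)

/-- Up-to satisfaction `(E, I) ⊨_L e` of a positive body element. -/
def upSat (E I : Set Atom) (e : BElem L Atom) : Prop :=
  ∀ F : Set Atom, E ⊆ F → F ⊆ I → kb.sat2 F e

/-- `(E, I) ⊨_L body(r)`. -/
def upBody (E I : Set Atom) (r : Rule L Atom) : Prop :=
  (∀ e ∈ r.pos, kb.upSat E I e) ∧
    (∀ e ∈ r.neg, ∀ F : Set Atom, E ⊆ F → F ⊆ I → ¬ kb.sat2 F e)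

/-- `𝒯_KB(E, I) = {head(r) | r ∈ Π, (E, I) ⊨_L body(r)}`. -/
def TcOp (E I : Set Atom) : Set Atom :=
  {H | ∃ r ∈ kb.rules, r.head = H ∧ kb.upBody E I r}

/-- `𝒯^α_KB(∅, I)`: the least fixpoint of `𝒯_KB(·, I)`. -/
def Talpha (I : Set Atom) : Set Atom := sInf {E | kb.TcOp E I ⊆ E}

/-- The theory `L ∪ 𝒯^α_KB(∅, I)|_Ω ∪ ¬.Ī|_Ω`. -/
def wsTheory (I : Set Atom) : L.Theory :=
  kb.theory ∪ kb.toSent '' {a | a ∈ kb.Talpha I ∧ kb.inOmega a} ∪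
    (fun a => (kb.toSent a).not) '' {a | a ∉ I ∧ kb.inOmega a}

/-- `I` is a well-supported answer set of `KB`. -/
def IsWSAnswerSet (I : Set Atom) : Prop :=
  kb.IsModel I ∧ ∀ a ∈ I, a ∈ kb.Talpha I ∨ kb.wsTheory I ⊨ᵇ kb.toSent a

/-- The sequence `𝒯⁰ = ∅`, `𝒯^{k+1} = 𝒯_KB(𝒯^k, I)`. -/
def Titer (I : Set Atom) : ℕ → Set Atom
  | 0 => ∅
  | n + 1 => kb.TcOp (Titer I n) I

/-- The sequence `W⁰ = ∅`, `W^{k+1} = W_KB(W^k)`. -/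
def Witer : ℕ → Set (Lit Atom)
  | 0 => ∅
  | n + 1 => kb.WOp (Witer n)

/-- The sequence `E₀ = ∅`, `E_i = {H ∈ HB_Π | (𝒯^{i-1}, I) ⊨_L H}`. -/
def Eseq (I : Set Atom) : ℕ → Set Atom
  | 0 => ∅
  | n + 1 => {H | kb.upSat (kb.Titer I n) I (BElem.atom H)}

end KB

/-!
Enlarging `U` only enlarges `I ∪ ¬.U`, so it shrinks the family of consistent `S ⊇ I ∪ ¬.U`
quantified over in (iii) and (b), and it makes (i) easier to meet. Hence every atom of an
unfounded set keeps its witnesses in any larger set, in particular in the union of all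
unfounded sets. If `I ∪ L` is inconsistent, `HB_Π` itself is unfounded and is the union.
-/

namespace KB

variable (kb : KB L Atom) {I : Set (Lit Atom)} {U : Set Atom}

theorem IsUnfounded.unfoundedCond (hU : kb.IsUnfounded I U) (hI : kb.ConsistentWith I) :
    kb.UnfoundedCond I U :=
  (hU.resolve_right fun h => h.1 hI).2

theorem unfoundedCond_sUnion {𝒰 : Set (Set Atom)} (h𝒰 : ∀ U ∈ 𝒰, kb.UnfoundedCond I U) :
    kb.UnfoundedCond I (⋃₀ 𝒰) := by
  rintro H ⟨U, hU, hHU⟩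
  obtain ⟨hrules, hhead⟩ := h𝒰 U hU H hHU
  have hext : I ∪ Sum.inr '' U ⊆ I ∪ Sum.inr '' ⋃₀ 𝒰 :=
    Set.union_subset_union_right I (Set.image_mono (Set.subset_sUnion_of_mem hU))
  refine ⟨fun r hr hrH => ?_, fun S hS hIS => hhead S hS (hext.trans hIS)⟩
  rcases hrules r hr hrH with ⟨a, hpos, hord, ha⟩ | hneg | ⟨φ, hφ, hS⟩ | hfol
  · exact Or.inl ⟨a, hpos, hord, ha.imp_right fun haU => ⟨U, hU, haU⟩⟩
  · exact Or.inr (Or.inl hneg)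
  · exact Or.inr (Or.inr (Or.inl ⟨φ, hφ, fun S hS' hIS => hS S hS' (hext.trans hIS)⟩))
  · exact Or.inr (Or.inr (Or.inr hfol))

theorem isUnfounded_sUnion (I : Set (Lit Atom)) :
    kb.IsUnfounded I (⋃₀ {U | kb.IsUnfounded I U}) := by
  by_cases hI : kb.ConsistentWith I
  · exact Or.inl ⟨hI, kb.unfoundedCond_sUnion fun U hU => hU.unfoundedCond kb hI⟩
  · exact Or.inr ⟨hI, Set.eq_univ_of_univ_subset (Set.subset_sUnion_of_mem (Or.inr ⟨hI, rfl⟩))⟩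

end KB

/-- The union of all unfounded sets of `KB` relative to `I` is an
unfounded set, and it is the greatest unfounded set of `KB` relative to `I`. -/
theorem greatest_unfounded_set {L : FirstOrder.Language} {Atom : Type*}
    (kb : KB L Atom) (I : Set (Lit Atom)) :
    kb.IsUnfounded I (⋃₀ {U | kb.IsUnfounded I U}) ∧
      IsGreatest {U | kb.IsUnfounded I U} (⋃₀ {U | kb.IsUnfounded I U}) :=
  ⟨kb.isUnfounded_sUnion I, kb.isUnfounded_sUnion I, fun _ hU => Set.subset_sUnion_of_mem hU⟩

end FOLProg
end

section
/- Let KB = (L, Π) be an FOL-program. The operator U_KB : 2^{Lit_Π} → 2^{HB_Π}, which maps I to the greatest unfounded set of KB relative to I, is monotone: for all I₁ ⊆ I₂ ⊆ Lit_Π, U_KB(I₁) ⊆ U_KB(I₂). -/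
/-!
Formalization of FOL-programs (combined knowledge bases `KB = (L, Π)` of a
first-order theory and a ground rule base) and their well-founded semantics.

* The Herbrand base `HB_Π` is modelled as a type `Atom`; each atom `a` has an
  associated first-order sentence `toSent a`, and `inOmega a` says whether the
  predicate symbol of `a` is in the shared set `Ω` (atoms with `¬ inOmega a`
  are the *ordinary* atoms).
* The field `atomic` expresses that atoms are genuinely atomic ground
  sentences: every consistent set of literals is a satisfiable theory.
* Literals `Lit Atom = Atom ⊕ Atom`: `Sum.inl a` is the atom `a`,
  `Sum.inr a` is the negated atom `¬ a`.
-/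

open FirstOrder

namespace FOLProg

variable {L : FirstOrder.Language} {Atom : Type*}

/-- Entailment is monotone in the theory. -/
theorem models_mono {L : FirstOrder.Language} {T T' : L.Theory} {φ : L.Sentence}
    (hs : T ⊆ T') (h : T ⊨ᵇ φ) : T' ⊨ᵇ φ := by
  intro M v xs
  have hm : M ⊨ T := (M.is_model).mono hs
  exact h ⟨M.Carrier⟩ v xs

theorem litConsistent_mono {Atom : Type*} {S S' : Set (Lit Atom)}
    (hs : S ⊆ S') (h : LitConsistent S') : LitConsistent S := by
  rw [LitConsistent, Set.eq_empty_iff_forall_notMem] at h ⊢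
  intro a ⟨h1, h2⟩
  exact h a ⟨hs h1, hs h2⟩

theorem restrict_mono {L : FirstOrder.Language} {Atom : Type*} (kb : KB L Atom)
    {S S' : Set (Lit Atom)} (hs : S ⊆ S') : kb.restrict S ⊆ kb.restrict S' := by
  apply Set.union_subset_union <;> apply Set.image_mono <;>
    exact fun a ⟨h1, h2⟩ => ⟨hs h1, h2⟩

theorem extTheory_mono {L : FirstOrder.Language} {Atom : Type*} (kb : KB L Atom)
    {S S' : Set (Lit Atom)} (hs : S ⊆ S') : kb.extTheory S ⊆ kb.extTheory S' :=
  Set.union_subset_union (subset_refl _) (restrict_mono kb hs)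

/-- The operator `U_KB` (greatest unfounded set) is monotone. -/
theorem UOp_monotone {L : FirstOrder.Language} {Atom : Type*}
    (kb : KB L Atom) :
    ∀ I₁ I₂ : Set (Lit Atom), I₁ ⊆ I₂ → kb.UOp I₁ ⊆ kb.UOp I₂ := by
  intro I₁ I₂ h a ha
  by_cases hc : kb.ConsistentWith I₂
  · obtain ⟨U, hU, haU⟩ := ha
    refine ⟨U, ?_, haU⟩
    have hc1 : kb.ConsistentWith I₁ :=
      ⟨litConsistent_mono h hc.1, hc.2.mono (extTheory_mono kb h)⟩
    rcases hU with ⟨_, hcond⟩ | ⟨hnc, _⟩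
    · left
      refine ⟨hc, fun H hH => ?_⟩
      obtain ⟨ha, hb⟩ := hcond H hH
      constructor
      · intro r hr hhead
        rcases ha r hr hhead with ⟨x, h1, h2, h3⟩ | ⟨x, h1, h2, h3⟩ | ⟨φ, h1, h2⟩ | ⟨φ, h1, h2⟩
        · exact Or.inl ⟨x, h1, h2, h3.imp (fun hx => h hx) id⟩
        · exact Or.inr (Or.inl ⟨x, h1, h2, h h3⟩)
        · refine Or.inr (Or.inr (Or.inl ⟨φ, h1, fun S hS hsub => ?_⟩))
          exact h2 S hS (le_trans (Set.union_subset_union h (subset_refl _)) hsub)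
        · exact Or.inr (Or.inr (Or.inr ⟨φ, h1, models_mono (extTheory_mono kb h) h2⟩))
      · intro S hS hsub
        exact hb S hS (le_trans (Set.union_subset_union h (subset_refl _)) hsub)
    · exact absurd hc1 hnc
  · exact ⟨Set.univ, Or.inr ⟨hc, rfl⟩, trivial⟩

end FOLProg
end

section
/- Let KB = (∅, Π) be a normal logic program and S ⊆ Lit_Π a consistent set. Then the greatest unfounded set U_KB(S) of KB relative to S equals the greatest unfounded set U_Π(S) of the normal program Π with respect to S in the standard sense. -/
/-!
Formalization of FOL-programs (combined knowledge bases `KB = (L, Π)` of a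
first-order theory and a ground rule base) and their well-founded semantics.

* The Herbrand base `HB_Π` is modelled as a type `Atom`; each atom `a` has an
  associated first-order sentence `toSent a`, and `inOmega a` says whether the
  predicate symbol of `a` is in the shared set `Ω` (atoms with `¬ inOmega a`
  are the *ordinary* atoms).
* The field `atomic` expresses that atoms are genuinely atomic ground
  sentences: every consistent set of literals is a satisfiable theory.
* Literals `Lit Atom = Atom ⊕ Atom`: `Sum.inl a` is the atom `a`,
  `Sum.inr a` is the negated atom `¬ a`.
-/

open FirstOrder

namespace FOLProg

variable {L : FirstOrder.Language} {Atom : Type*}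

/-!
In a normal program `L = ∅` and `Ω = ∅`, so every theory `L ∪ S|_Ω` is empty and no rule
body contains an FOL-formula. Conditions (iii) and (iv) of an unfounded set are therefore
never met, (i) and (ii) become the standard conditions, and (b) always holds: the empty
theory entails no atom, since atoms are atomic and `{¬A}` is satisfiable. For the same
reason every consistent `S` is consistent with `L`, so the degenerate clause
`U = HB_Π` does not apply.
-/

open FirstOrder.Language

namespace KB

variable (kb : KB L Atom)

theorem not_empty_models_toSent (a : Atom) : ¬ (∅ : L.Theory) ⊨ᵇ kb.toSent a := by
  rw [Theory.models_iff_not_satisfiable, not_not]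
  refine (kb.atomic {Sum.inr a} ?_).mono ?_
  · simp [LitConsistent, litPos, litNeg]
  · simp [litTheory, litPos, litNeg]

theorem restrict_eq_empty (hΩ : ∀ a, ¬ kb.inOmega a) (I : Set (Lit Atom)) :
    kb.restrict I = ∅ := by
  simp [restrict, hΩ]

theorem folOf_eq_empty (hΩ : ∀ a, ¬ kb.inOmega a) {s : Set (BElem L Atom)}
    (hs : ∀ e ∈ s, ∃ a, e = BElem.atom a) : kb.folOf s = ∅ := by
  refine Set.eq_empty_of_forall_notMem fun φ hφ => ?_
  rcases hφ with hφ | ⟨a, ⟨_, ha⟩, _⟩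
  · obtain ⟨_, h⟩ := hs _ hφ
    cases h
  · exact hΩ a ha

namespace IsNormal

variable {kb}

theorem extTheory_eq_empty (hN : kb.IsNormal) (I : Set (Lit Atom)) :
    kb.extTheory I = ∅ := by
  rw [extTheory, hN.1, kb.restrict_eq_empty hN.2.1, Set.union_empty]

theorem folOf_pos_eq_empty (hN : kb.IsNormal) {r : Rule L Atom} (hr : r ∈ kb.rules) :
    kb.folOf r.pos = ∅ :=
  kb.folOf_eq_empty hN.2.1 fun e he => hN.2.2 r hr e (Or.inl he)

theorem folOf_neg_eq_empty (hN : kb.IsNormal) {r : Rule L Atom} (hr : r ∈ kb.rules) :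
    kb.folOf r.neg = ∅ :=
  kb.folOf_eq_empty hN.2.1 fun e he => hN.2.2 r hr e (Or.inr he)

theorem consistentWith (hN : kb.IsNormal) {S : Set (Lit Atom)} (hS : LitConsistent S) :
    kb.ConsistentWith S :=
  ⟨hS, hN.extTheory_eq_empty S ▸ Theory.isSatisfiable_empty L⟩

theorem unfoundedCond_iff (hN : kb.IsNormal) {I : Set (Lit Atom)} {U : Set Atom} :
    kb.UnfoundedCond I U ↔ kb.StdUnfounded I U := by
  constructor
  · intro hU a ha r hr hhead
    rcases (hU a ha).1 r hr hhead with ⟨b, hb, -, hbI⟩ | ⟨b, hb, -, hbI⟩ | ⟨φ, hφ, -⟩ |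
        ⟨φ, hφ, -⟩
    · exact Or.inl ⟨b, hb, hbI⟩
    · exact Or.inr ⟨b, hb, hbI⟩
    · exact absurd hφ (hN.folOf_pos_eq_empty hr ▸ Set.notMem_empty φ)
    · exact absurd hφ (hN.folOf_neg_eq_empty hr ▸ Set.notMem_empty φ)
  · intro hU a ha
    refine ⟨fun r hr hhead => ?_, fun S' _ _ => ?_⟩
    · rcases hU a ha r hr hhead with ⟨b, hb, hbI⟩ | ⟨b, hb, hbI⟩
      · exact Or.inl ⟨b, hb, hN.2.1 b, hbI⟩
      · exact Or.inr (Or.inl ⟨b, hb, hN.2.1 b, hbI⟩)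
    · rw [hN.extTheory_eq_empty S']
      exact kb.not_empty_models_toSent a

theorem isUnfounded_iff (hN : kb.IsNormal) {S : Set (Lit Atom)} (hS : LitConsistent S)
    {U : Set Atom} : kb.IsUnfounded S U ↔ kb.StdUnfounded S U := by
  simp only [IsUnfounded, hN.consistentWith hS, hN.unfoundedCond_iff, true_and, not_true_eq_false,
    false_and, or_false]

end IsNormal

end KB

/-- For a normal logic program `KB = (∅, Π)` and a consistent
`S ⊆ Lit_Π`, the greatest unfounded set `U_KB(S)` equals the standard greatest
unfounded set `U_Π(S)`. -/
theorem normal_UOp_eq_StdU {L : FirstOrder.Language} {Atom : Type*}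
    (kb : KB L Atom) (hN : kb.IsNormal)
    (S : Set (Lit Atom)) (hS : LitConsistent S) :
    kb.UOp S = kb.StdU S := by
  simp only [KB.UOp, KB.StdU, hN.isUnfounded_iff hS]

end FOLProg
end
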